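/- arXiv:2512.07289 — 3 statements merged into one kernel-verified Lean document; each statement's English description precedes it below -/
import Mathlib

section
/- With the periodic CoM-free map m as above and w(x) = x − ⌊x⌋ the fractional-part map applied entrywise, m is also invariant under entrywise wrapping combined with a common shift: for any ε ∈ ℝ^n with (x̄(ε), ȳ(ε)) ≠ (0,0) and any r ∈ ℝ, m(w(ε + r·1)) = m(ε). -/
open Real Finset

/-- `ȳ(ε) = (1/n) Σ_j sin(2π ε_j)`. -/
noncomputable def ybar {n : ℕ} (ε : Fin n → ℝ) : ℝ :=
  (1 / (n : ℝ)) * ∑ j : Fin n, Real.sin (2 * π * ε j)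

/-- `x̄(ε) = (1/n) Σ_j cos(2π ε_j)`. -/
noncomputable def xbar {n : ℕ} (ε : Fin n → ℝ) : ℝ :=
  (1 / (n : ℝ)) * ∑ j : Fin n, Real.cos (2 * π * ε j)

/-- `θ(ε) = atan2(ȳ(ε), x̄(ε))`, realized as the complex argument of `x̄ + i ȳ`. -/
noncomputable def theta {n : ℕ} (ε : Fin n → ℝ) : ℝ :=
  Complex.arg ⟨xbar ε, ybar ε⟩

/-- The periodic CoM-free map `m(ε)_i = w(ε_i − θ(ε)/(2π))`, with `w` the fractional part. -/
noncomputable def comFree {n : ℕ} (ε : Fin n → ℝ) : Fin n → ℝ :=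
  fun i => Int.fract (ε i - theta ε / (2 * π))

/-!
Wrapping leaves every phase `exp (2πiε_j)` unchanged, hence also `θ`, and `m` absorbs the integer
parts. A common shift by `r` multiplies `x̄ + iȳ` by `exp (2πir)`, so it rotates `θ` by `2πr`
modulo `2π`, which cancels the shift inside `m`.
-/

lemma sin_two_pi_mul_fract (x : ℝ) : sin (2 * π * Int.fract x) = sin (2 * π * x) := by
  rw [Int.fract, mul_sub, show 2 * π * (⌊x⌋ : ℝ) = ⌊x⌋ * (2 * π) by ring,
    sin_sub_int_mul_two_pi]

lemma cos_two_pi_mul_fract (x : ℝ) : cos (2 * π * Int.fract x) = cos (2 * π * x) := by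
  rw [Int.fract, mul_sub, show 2 * π * (⌊x⌋ : ℝ) = ⌊x⌋ * (2 * π) by ring,
    cos_sub_int_mul_two_pi]

lemma Int.fract_sub_div_two_pi_of_coe_eq {θ φ : ℝ} (h : (θ : Angle) = φ) (x : ℝ) :
    Int.fract (x - θ / (2 * π)) = Int.fract (x - φ / (2 * π)) := by
  obtain ⟨k, hk⟩ := (Angle.angle_eq_iff_two_pi_dvd_sub).1 h
  have hθ : θ / (2 * π) = φ / (2 * π) + k := by
    field_simp
    linarith
  rw [hθ, ← sub_sub, Int.fract_sub_intCast]

noncomputable def meanPhasor {n : ℕ} (ε : Fin n → ℝ) : ℂ :=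
  ⟨xbar ε, ybar ε⟩

lemma theta_eq_arg_meanPhasor {n : ℕ} (ε : Fin n → ℝ) : theta ε = (meanPhasor ε).arg :=
  rfl

lemma meanPhasor_eq_zero_iff {n : ℕ} (ε : Fin n → ℝ) :
    meanPhasor ε = 0 ↔ xbar ε = 0 ∧ ybar ε = 0 :=
  Complex.ext_iff

lemma meanPhasor_fract {n : ℕ} (ε : Fin n → ℝ) :
    meanPhasor (fun i => Int.fract (ε i)) = meanPhasor ε := by
  simp only [meanPhasor, xbar, ybar, sin_two_pi_mul_fract, cos_two_pi_mul_fract]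

lemma meanPhasor_add_const {n : ℕ} (ε : Fin n → ℝ) (r : ℝ) :
    meanPhasor (fun i => ε i + r) = Complex.exp ((2 * π * r : ℝ) * Complex.I) * meanPhasor ε := by
  apply Complex.ext
  · simp only [meanPhasor, xbar, ybar, Complex.mul_re, Complex.exp_ofReal_mul_I_re,
      Complex.exp_ofReal_mul_I_im, mul_add, cos_add, sum_sub_distrib, ← sum_mul]
    ring
  · simp only [meanPhasor, xbar, ybar, Complex.mul_im, Complex.exp_ofReal_mul_I_re,
      Complex.exp_ofReal_mul_I_im, mul_add, sin_add, sum_add_distrib, ← sum_mul]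
    ring

lemma theta_fract {n : ℕ} (ε : Fin n → ℝ) : theta (fun i => Int.fract (ε i)) = theta ε := by
  rw [theta_eq_arg_meanPhasor, meanPhasor_fract, theta_eq_arg_meanPhasor]

lemma coe_theta_add_const {n : ℕ} {ε : Fin n → ℝ} (hε : meanPhasor ε ≠ 0) (r : ℝ) :
    (theta (fun i => ε i + r) : Angle) = (2 * π * r + theta ε : ℝ) := by
  rw [theta_eq_arg_meanPhasor, meanPhasor_add_const,
    Complex.arg_mul_coe_angle (Complex.exp_ne_zero _) hε, Complex.arg_exp_mul_I,
    Angle.coe_toIocMod, Angle.coe_add, theta_eq_arg_meanPhasor]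

lemma comFree_fract {n : ℕ} (ε : Fin n → ℝ) :
    comFree (fun i => Int.fract (ε i)) = comFree ε := by
  funext i
  simp only [comFree, theta_fract]
  exact Int.fract_eq_fract.2 ⟨-⌊ε i⌋, by rw [Int.fract]; push_cast; ring⟩

lemma comFree_add_const {n : ℕ} {ε : Fin n → ℝ} (hε : meanPhasor ε ≠ 0) (r : ℝ) :
    comFree (fun i => ε i + r) = comFree ε := by
  funext i
  rw [comFree, Int.fract_sub_div_two_pi_of_coe_eq (coe_theta_add_const hε r), comFree]
  congr 1
  field_simp
  ring

/-- The periodic CoM-free map is invariant under entrywise wrapping combined with a common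
shift: `m(w(ε + r·1)) = m(ε)`. -/
theorem comFree_wrap_shift_invariant {n : ℕ} (ε : Fin n → ℝ)
    (hne : ¬(xbar ε = 0 ∧ ybar ε = 0)) (r : ℝ) :
    comFree (fun i => Int.fract (ε i + r)) = comFree ε :=
  (comFree_fract fun i => ε i + r).trans
    (comFree_add_const (mt (meanPhasor_eq_zero_iff ε).1 hne) r)
end

section
/- The map m is idempotent: for any ε ∈ ℝ^n with (x̄(ε), ȳ(ε)) ≠ (0,0), m(m(ε)) = m(ε). -/
open Real Finset

/-!
Identify `(x̄, ȳ)` with `z(ε) = (1/n) Σ_j exp(2πi ε_j)`, so that `θ(ε) = arg z(ε)`.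
Wrapping coordinates does not move the points `exp(2πi ε_j)`, and shifting all of them by
`-θ/(2π)` multiplies `z` by `exp(-iθ)`. Hence `z(m(ε)) = |z(ε)|` is a nonnegative real,
`θ(m(ε)) = 0`, and on `m(ε)` the map `m` is just the fractional part, which is idempotent.
-/

section

open Complex

noncomputable def circleCentroid {n : ℕ} (ε : Fin n → ℝ) : ℂ :=
  ⟨xbar ε, ybar ε⟩

lemma circleCentroid_eq_sum_exp {n : ℕ} (ε : Fin n → ℝ) :
    circleCentroid ε = ((1 / n : ℝ) : ℂ) * ∑ j, exp ((2 * π * ε j : ℝ) * I) := by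
  apply Complex.ext <;>
  simp only [circleCentroid, xbar, ybar, re_ofReal_mul, im_ofReal_mul, re_sum, im_sum,
    exp_ofReal_mul_I_re, exp_ofReal_mul_I_im]

lemma exp_two_pi_fract_mul_I (x : ℝ) :
    exp ((2 * π * Int.fract x : ℝ) * I) = exp ((2 * π * x : ℝ) * I) := by
  have h : ((2 * π * Int.fract x : ℝ) : ℂ) * I = (2 * π * x : ℝ) * I - ⌊x⌋ * (2 * π * I) := by
    push_cast [Int.fract]; ring
  rw [h, Complex.exp_sub, exp_int_mul_two_pi_mul_I, div_one]

lemma circleCentroid_fract_sub {n : ℕ} (ε : Fin n → ℝ) (t : ℝ) :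
    circleCentroid (fun i => Int.fract (ε i - t)) =
      exp ((-(2 * π * t) : ℝ) * I) * circleCentroid ε := by
  rw [circleCentroid_eq_sum_exp, circleCentroid_eq_sum_exp, mul_left_comm]
  congr 1
  rw [Finset.mul_sum]
  refine Finset.sum_congr rfl fun j _ => ?_
  rw [exp_two_pi_fract_mul_I, ← Complex.exp_add]
  congr 1
  push_cast
  ring

lemma circleCentroid_comFree {n : ℕ} (ε : Fin n → ℝ) :
    circleCentroid (comFree ε) = ‖circleCentroid ε‖ := by
  set z := circleCentroid ε
  have hθ : 2 * π * (theta ε / (2 * π)) = arg z := by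
    field_simp; rfl
  calc circleCentroid (comFree ε) = exp ((-arg z : ℝ) * I) * z := by
        unfold comFree; rw [circleCentroid_fract_sub, hθ]
    _ = exp ((-arg z : ℝ) * I) * (‖z‖ * exp (arg z * I)) := by rw [norm_mul_exp_arg_mul_I]
    _ = ‖z‖ := by rw [mul_left_comm, ← Complex.exp_add]; simp

end

lemma theta_comFree {n : ℕ} (ε : Fin n → ℝ) : theta (comFree ε) = 0 :=
  (congrArg Complex.arg (circleCentroid_comFree ε)).trans
    (Complex.arg_ofReal_of_nonneg (norm_nonneg _))

theorem comFree_idempotent_general {n : ℕ} (ε : Fin n → ℝ) :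
    comFree (comFree ε) = comFree ε := by
  funext i
  simp [comFree, theta_comFree, Int.fract_fract]

/-- The periodic CoM-free map is idempotent: `m(m(ε)) = m(ε)`. -/
theorem comFree_idempotent {n : ℕ} (ε : Fin n → ℝ)
    (hne : ¬(xbar ε = 0 ∧ ybar ε = 0)) :
    comFree (comFree ε) = comFree ε :=
  comFree_idempotent_general ε
end

section
/- For ε ∈ ℝ^n with (x̄(ε), ȳ(ε)) ≠ (0,0), define g_j(ε) = (x̄(ε)cos(2πε_j) + ȳ(ε)sin(2πε_j))/(n(x̄(ε)² + ȳ(ε)²)) and, for s̄ ∈ ℝ^n, set s = s̄ − (Σ_i s̄_i)·g(ε). Then the map ε ↦ s (for fixed s̄) is invariant under common shifts and entrywise wrapping: replacing ε by w(ε + r·1) for any r ∈ ℝ leaves s unchanged. -/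
open Real Finset

/-- `g_j(ε) = (x̄ cos(2πε_j) + ȳ sin(2πε_j)) / (n(x̄² + ȳ²))`. -/
noncomputable def gfun {n : ℕ} (ε : Fin n → ℝ) (j : Fin n) : ℝ :=
  (xbar ε * Real.cos (2 * π * ε j) + ybar ε * Real.sin (2 * π * ε j)) /
    ((n : ℝ) * (xbar ε ^ 2 + ybar ε ^ 2))

theorem Function.Periodic.map_fract {α β : Type*} [Ring α] [LinearOrder α] [FloorRing α]
    {f : α → β} (h : Function.Periodic f 1) (x : α) : f (Int.fract x) = f x := by
  simpa using h.sub_int_mul_eq (x := x) ⌊x⌋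

lemma cos_two_pi_mul_periodic : Function.Periodic (fun x => cos (2 * π * x)) 1 := fun x => by
  simp only [mul_add, mul_one, cos_add_two_pi]

lemma sin_two_pi_mul_periodic : Function.Periodic (fun x => sin (2 * π * x)) 1 := fun x => by
  simp only [mul_add, mul_one, sin_add_two_pi]

section Wrapping

variable {n : ℕ} (ε : Fin n → ℝ)

lemma xbar_fract : xbar (fun i => Int.fract (ε i)) = xbar ε := by
  simp only [xbar, cos_two_pi_mul_periodic.map_fract]

lemma ybar_fract : ybar (fun i => Int.fract (ε i)) = ybar ε := by
  simp only [ybar, sin_two_pi_mul_periodic.map_fract]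

lemma gfun_fract : gfun (fun i => Int.fract (ε i)) = gfun ε := by
  funext j
  simp only [gfun, xbar_fract, ybar_fract, cos_two_pi_mul_periodic.map_fract,
    sin_two_pi_mul_periodic.map_fract]

end Wrapping

lemma rotate_inner_rotate {c s : ℝ} (hcs : s ^ 2 + c ^ 2 = 1) (a b a' b' : ℝ) :
    (c * a - s * b) * (c * a' - s * b') + (s * a + c * b) * (s * a' + c * b')
      = a * a' + b * b' := by
  linear_combination (a * a' + b * b') * hcs

section Shift

variable {n : ℕ} (ε : Fin n → ℝ) (r : ℝ)

lemma xbar_add_const : xbar (fun i => ε i + r)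
    = cos (2 * π * r) * xbar ε - sin (2 * π * r) * ybar ε := by
  simp only [xbar, ybar, mul_add, cos_add, sum_sub_distrib, ← sum_mul]
  ring

lemma ybar_add_const : ybar (fun i => ε i + r)
    = sin (2 * π * r) * xbar ε + cos (2 * π * r) * ybar ε := by
  simp only [xbar, ybar, mul_add, sin_add, sum_add_distrib, ← sum_mul]
  ring

/-- Under a common shift by `r`, both `(x̄, ȳ)` and `(cos 2πεⱼ, sin 2πεⱼ)` rotate by `2πr`, so the
numerator and denominator of `gⱼ` are inner products of rotated vectors. -/
lemma gfun_add_const : gfun (fun i => ε i + r) = gfun ε := by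
  funext j
  have hcs := sin_sq_add_cos_sq (2 * π * r)
  have hcos : cos (2 * π * (ε j + r))
      = cos (2 * π * r) * cos (2 * π * ε j) - sin (2 * π * r) * sin (2 * π * ε j) := by
    rw [mul_add, cos_add]; ring
  have hsin : sin (2 * π * (ε j + r))
      = sin (2 * π * r) * cos (2 * π * ε j) + cos (2 * π * r) * sin (2 * π * ε j) := by
    rw [mul_add, sin_add]; ring
  simp only [gfun, xbar_add_const, ybar_add_const, hcos, hsin, sq]
  rw [rotate_inner_rotate hcs, rotate_inner_rotate hcs]

end Shift

theorem adjusted_score_periodic_translation_invariant_general {n : ℕ} (ε : Fin n → ℝ)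
    (sbar : Fin n → ℝ) (r : ℝ) :
    (fun j => sbar j - (∑ i : Fin n, sbar i) * gfun (fun i => Int.fract (ε i + r)) j)
      = fun j => sbar j - (∑ i : Fin n, sbar i) * gfun ε j := by
  rw [gfun_fract (fun i => ε i + r), gfun_add_const]

/-- The adjusted score `s = s̄ − (Σ_i s̄_i) g(ε)` is invariant under common shifts
combined with entrywise wrapping of `ε`. -/
theorem adjusted_score_periodic_translation_invariant {n : ℕ} (ε : Fin n → ℝ)
    (hne : ¬(xbar ε = 0 ∧ ybar ε = 0)) (sbar : Fin n → ℝ) (r : ℝ) :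
    (fun j => sbar j - (∑ i : Fin n, sbar i) * gfun (fun i => Int.fract (ε i + r)) j)
      = fun j => sbar j - (∑ i : Fin n, sbar i) * gfun ε j :=
  adjusted_score_periodic_translation_invariant_general ε sbar r
end
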